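/- arXiv:math/0109039 — 3 statements merged into one kernel-verified Lean document; each statement's English description precedes it below -/
import Mathlib

section
/- Let $\phi^{N,k}(x,z) = \sum_{d=0}^{\infty} e^{dx} \frac{(kd)!}{(d!)^N} \prod_{j=1}^{kd}(1+\frac{k}{j}z) \prod_{j=1}^{d}(1+\frac{1}{j}z)^{-N}$ and $\Phi^{N,k}(x,z) = e^{zx}\phi^{N,k}(x,z)$. Then $\Phi^{N,k}$ satisfies $\left((\partial_x)^{N-1} - k e^x (k\partial_x + k-1)(k\partial_x + k-2)\cdots(k\partial_x + 1)\right)\Phi^{N,k}(x,z) = z^{N-1} e^{zx}$ as an identity of formal power series in $e^x$ with coefficients rational functions in $z$. -/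
open scoped BigOperators

/-- The coefficient `φ_d^{N,k}(z)` of `e^{dx}` in `φ^{N,k}(x,z)`, as a rational function in `z`:
`φ_d = (kd)!/(d!)^N ⬝ ∏_{j=1}^{kd}(1 + (k/j)z) ⬝ ∏_{j=1}^{d}(1 + z/j)^{-N}`. -/
noncomputable def phiCoeff (N k d : ℕ) : RatFunc ℚ :=
  (((k * d).factorial : RatFunc ℚ) / ((d.factorial : RatFunc ℚ)) ^ N) *
    (∏ j ∈ Finset.Icc 1 (k * d), (1 + ((k : RatFunc ℚ) / (j : RatFunc ℚ)) * RatFunc.X)) *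
    ((∏ j ∈ Finset.Icc 1 d, (1 + RatFunc.X / (j : RatFunc ℚ))) ^ N)⁻¹

/-!
Absorbing the factorials into the products gives
`φ_d = ∏_{j=1}^{kd} (j + kz) / (∏_{j=1}^{d} (j + z))^N`.
Passing from `d` to `d + 1` multiplies the numerator by
`∏_{m=1}^{k} (k(d+z) + m)` and the denominator by `(d+1+z)^N`; the top factor `m = k` of the
former is `k(d+1+z)`, which cancels one power of `d+1+z` and leaves exactly the recurrence.
-/

open Finset
open scoped Nat

theorem factorial_mul_prod_Icc_one_add_div {K : Type*} [Field K] [CharZero K] (n : ℕ) (a : K) :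
    (n ! : K) * ∏ j ∈ Icc 1 n, (1 + a / j) = ∏ j ∈ Icc 1 n, ((j : K) + a) := by
  induction n with
  | zero => simp
  | succ n ih =>
    have hn : ((n + 1 : ℕ) : K) ≠ 0 := Nat.cast_ne_zero.mpr n.succ_ne_zero
    rw [prod_Icc_succ_top (by omega), prod_Icc_succ_top (by omega), ← ih, Nat.factorial_succ,
      Nat.cast_mul]
    field_simp

theorem prod_Icc_one_add {M : Type*} [CommMonoid M] (f : ℕ → M) (n k : ℕ) :
    ∏ j ∈ Icc 1 (n + k), f j = (∏ j ∈ Icc 1 n, f j) * ∏ m ∈ Icc 1 k, f (n + m) := by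
  induction k with
  | zero => simp
  | succ k ih =>
    rw [← add_assoc, prod_Icc_succ_top (by omega), prod_Icc_succ_top (by omega), ih, mul_assoc,
      add_assoc]

theorem prod_Icc_natCast_add_mul_succ {R : Type*} [CommRing R] (k d : ℕ) (hk : 1 ≤ k) (z : R) :
    ∏ j ∈ Icc 1 (k * (d + 1)), ((j : R) + k * z) =
      (∏ j ∈ Icc 1 (k * d), ((j : R) + k * z)) * (k * (d + 1 + z)) *
        ∏ m ∈ Icc 1 (k - 1), (k * (d + z) + (m : R)) := by
  obtain ⟨e, rfl⟩ : ∃ e, k = e + 1 := ⟨k - 1, by omega⟩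
  have hshift : ∀ m : ℕ, (((e + 1) * d + m : ℕ) : R) + (e + 1 : ℕ) * z =
      (e + 1 : ℕ) * (d + z) + m := by
    intro m; push_cast; ring
  rw [mul_add_one, prod_Icc_one_add]
  simp_rw [hshift]
  rw [prod_Icc_succ_top (by omega), Nat.add_sub_cancel]
  push_cast
  ring

theorem natCast_add_X_ne_zero (n : ℕ) : (n : RatFunc ℚ) + RatFunc.X ≠ 0 := by
  have h : (n : RatFunc ℚ) + RatFunc.X =
      algebraMap (Polynomial ℚ) (RatFunc ℚ) (Polynomial.X + Polynomial.C (n : ℚ)) := by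
    simp [add_comm]
  exact h ▸ RatFunc.algebraMap_ne_zero (Polynomial.X_add_C_ne_zero _)

theorem phiCoeff_eq (N k d : ℕ) :
    phiCoeff N k d = (∏ j ∈ Icc 1 (k * d), ((j : RatFunc ℚ) + (k : RatFunc ℚ) * RatFunc.X)) /
      (∏ j ∈ Icc 1 d, ((j : RatFunc ℚ) + RatFunc.X)) ^ N := by
  rw [← factorial_mul_prod_Icc_one_add_div, ← factorial_mul_prod_Icc_one_add_div, phiCoeff]
  simp_rw [div_mul_eq_mul_div]
  rw [mul_pow]
  ring

/-- Since `∂ₓ` acts on `e^{(d+z)x}` by multiplication by `d + z`, comparing coefficients of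
`e^{(d+z)x}` turns the differential equation into these two identities. -/
theorem stmt_0 (N k : ℕ) (hN : 1 ≤ N) (hk : 1 ≤ k) :
    (((0 : RatFunc ℚ) + RatFunc.X) ^ (N - 1) * phiCoeff N k 0 = RatFunc.X ^ (N - 1)) ∧
    ∀ d : ℕ,
      (((d : RatFunc ℚ) + 1) + RatFunc.X) ^ (N - 1) * phiCoeff N k (d + 1) =
        (k : RatFunc ℚ) *
          (∏ m ∈ Finset.Icc 1 (k - 1),
            ((k : RatFunc ℚ) * ((d : RatFunc ℚ) + RatFunc.X) + (m : RatFunc ℚ))) *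
          phiCoeff N k d := by
  refine ⟨by simp [phiCoeff], fun d => ?_⟩
  obtain ⟨n, rfl⟩ : ∃ n, N = n + 1 := ⟨N - 1, by omega⟩
  have hlast : (d : RatFunc ℚ) + 1 + RatFunc.X ≠ 0 := by
    simpa using natCast_add_X_ne_zero (d + 1)
  rw [phiCoeff_eq, phiCoeff_eq, prod_Icc_natCast_add_mul_succ k d hk, prod_Icc_succ_top (by omega),
    Nat.cast_succ, Nat.add_sub_cancel, mul_pow]
  field_simp
  ring
end

section
/- Define $a_j(d)$ for $0 \le j \le d-1$ by $\sum_{j=0}^{d-1} a_j(d) x^j y^{d-1-j} = \prod_{j=1}^{d-1}\frac{jx+(d-j)y}{d}$. Then for any ordered partition $0 = i_0 < i_1 < \cdots < i_l = d$ and any formal variable $w$, $\sum_{c_1=0}^{i_1-i_0-1}\cdots\sum_{c_l=0}^{i_l-i_{l-1}-1} a_{c_1}(i_1-i_0)\cdots a_{c_l}(i_l-i_{l-1}) \prod_{j=1}^{l}(1+(d-i_{j-1})w)^{c_j - c_{j-1} + i_{j-1} - i_{j-2}} = \prod_{j=1}^{d-1}(1+jw)$, where by convention $c_0 = 0$ and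 $i_{-1} = i_0 = 0$. -/
/-- The coefficient `a_j(m)` of `x^j y^{m-1-j}` in `∏_{i=1}^{m-1} (ix + (m-i)y)/m`
(read off by setting `y = 1`). -/
noncomputable def aCoeff (m j : ℕ) : ℚ :=
  (∏ i ∈ Finset.Icc 1 (m - 1),
    (Polynomial.C ((i : ℚ) / (m : ℚ)) * Polynomial.X +
      Polynomial.C (((m : ℚ) - (i : ℚ)) / (m : ℚ)))).coeff j

/-!
Write `V_k = 1 + (d - i_k) w` and `m_k = i_k - i_{k-1}`. The exponent of `V_{j-1}` in a summand
is `c_j` plus the leftover `m_{j-1} - c_{j-1}` of the previous block; since `V_l = 1`, regrouping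
by blocks makes the summand a product of `a_{c_k}(m_k) V_{k-1}^{c_k} V_k^{m_k - c_k}`, so the sum
is a product over blocks of `∑_c a_c(m) (v + m w)^c v^{m-c}` with `v = V_k`. Homogenizing the
product that defines `a_c(m)` evaluates this as `v ∏_{j=1}^{m-1} ((j/m)(v + m w) + ((m-j)/m) v)
= ∏_{j=0}^{m-1} (v + j w)`, i.e. `∏ (1 + s w)` over `d - i_k ≤ s < d - i_{k-1}`, and these
ranges tile `[0, d)`.
-/

open Polynomial Finset

section BigOperators

variable {M : Type*} [CommMonoid M]

theorem prod_Icc_one_eq_prod_range (f : ℕ → M) (n : ℕ) :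
    ∏ j ∈ Icc 1 n, f j = ∏ j ∈ range n, f (j + 1) := by
  rw [← Ico_add_one_right_eq_Icc, prod_Ico_eq_prod_range, Nat.add_sub_cancel]
  simp only [add_comm]

theorem prod_Icc_one_sub_one_eq_prod_range {f : ℕ → M} (hf : f 0 = 1) (n : ℕ) :
    ∏ j ∈ Icc 1 (n - 1), f j = ∏ j ∈ range n, f j :=
  prod_subset (fun j => by simp only [mem_Icc, mem_range]; omega) fun j hj hj' => by
    obtain rfl : j = 0 := by simp only [mem_Icc, mem_range] at hj hj'; omega
    exact hf

theorem prod_range_prod_Ico_of_antitoneOn (f : ℕ → M) {b : ℕ → ℕ} {l : ℕ}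
    (hb : AntitoneOn b (Set.Iic l)) :
    ∏ k ∈ range l, ∏ s ∈ Ico (b (k + 1)) (b k), f s = ∏ s ∈ Ico (b l) (b 0), f s := by
  induction l with
  | zero => simp
  | succ n ih =>
    rw [prod_range_succ, ih (hb.mono (Set.Iic_subset_Iic.mpr n.le_succ)), mul_comm,
      prod_Ico_consecutive _ (hb (by simp) (by simp) n.le_succ) (hb (by simp) (by simp) n.zero_le)]

theorem prod_range_pow_mul_pow_succ (V : ℕ → M) (a b : ℕ → ℕ) {l : ℕ} (hV : V l = 1)
    (hb : b 0 = 0) :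
    ∏ k ∈ range l, V k ^ a k * V (k + 1) ^ b (k + 1) = ∏ k ∈ range l, V k ^ (a k + b k) := by
  simp_rw [pow_add, prod_mul_distrib]
  congr 1
  cases l with
  | zero => simp
  | succ n =>
    rw [prod_range_succ, hV, one_pow, mul_one, prod_range_succ' (fun k => V k ^ b k), hb,
      pow_zero, mul_one]

end BigOperators

namespace Polynomial

variable {R A : Type*} [CommSemiring R] [CommSemiring A] [Algebra R A]

theorem aeval_homogenize (p : R[X]) (n : ℕ) (u v : A) :
    MvPolynomial.aeval ![u, v] (p.homogenize n) =
      ∑ c ∈ range (n + 1), p.coeff c • (u ^ c * v ^ (n - c)) := by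
  rw [homogenize, map_sum, Nat.sum_antidiagonal_eq_sum_range_succ_mk]
  refine sum_congr rfl fun c _ => ?_
  simp [MvPolynomial.aeval_monomial, Finsupp.prod_fintype, Algebra.smul_def]

theorem aeval_homogenize_C_mul_X_add_C (a b : R) (u v : A) :
    MvPolynomial.aeval ![u, v] ((C a * X + C b).homogenize 1) = a • u + b • v := by
  simp [Algebra.smul_def]

end Polynomial

section aCoeff

variable {A : Type*} [CommRing A] [Algebra ℚ A]

theorem sum_aCoeff_smul_eq_prod_smul_add_smul {m : ℕ} (hm : 0 < m) (u v : A) :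
    ∑ c ∈ range m, aCoeff m c • (u ^ c * v ^ (m - 1 - c)) =
      ∏ i ∈ Icc 1 (m - 1), (((i : ℚ) / m) • u + (((m : ℚ) - i) / m) • v) := by
  have hdeg : ∀ i ∈ Icc 1 (m - 1),
      (C ((i : ℚ) / m) * X + C (((m : ℚ) - i) / m)).natDegree ≤ 1 :=
    fun _ _ => natDegree_linear_le
  have h := congrArg (MvPolynomial.aeval ![u, v]) (homogenize_finsetProd hdeg)
  rw [sum_const, Nat.card_Icc, smul_eq_mul, mul_one, Nat.add_sub_cancel, aeval_homogenize,
    Nat.sub_add_cancel hm, map_prod] at h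
  simp only [aeval_homogenize_C_mul_X_add_C] at h
  exact h

theorem sum_aCoeff_smul_add_nsmul {m : ℕ} (hm : 0 < m) (v w : A) :
    ∑ c ∈ range m, aCoeff m c • ((v + m • w) ^ c * v ^ (m - c)) = ∏ j ∈ range m, (v + j • w) := by
  have hm' : (m : ℚ) ≠ 0 := by positivity
  have hfactor : ∀ i ∈ Icc 1 (m - 1),
      ((i : ℚ) / m) • (v + m • w) + (((m : ℚ) - i) / m) • v = v + i • w := by
    intro i _
    rw [← Nat.cast_smul_eq_nsmul ℚ, ← Nat.cast_smul_eq_nsmul ℚ, smul_add, smul_smul,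
      add_right_comm, ← add_smul, div_mul_cancel₀ _ hm', ← add_div, add_sub_cancel,
      div_self hm', one_smul]
  calc ∑ c ∈ range m, aCoeff m c • ((v + m • w) ^ c * v ^ (m - c))
      = v * ∑ c ∈ range m, aCoeff m c • ((v + m • w) ^ c * v ^ (m - 1 - c)) := by
        rw [mul_sum]
        refine sum_congr rfl fun c hc => ?_
        rw [mul_smul_comm, mul_left_comm, ← pow_succ', Nat.sub_right_comm,
          Nat.sub_add_cancel (Nat.sub_pos_of_lt (mem_range.mp hc))]
    _ = ∏ j ∈ range m, (v + j • w) := by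
        rw [sum_aCoeff_smul_eq_prod_smul_add_smul hm, prod_congr rfl hfactor,
          prod_Icc_one_eq_prod_range, mul_comm]
        conv_rhs => rw [← Nat.sub_add_cancel hm, prod_range_succ', zero_smul, add_zero]

end aCoeff

theorem sum_aCoeff_smul_one_add_C_mul_X_pow {m β γ : ℕ} (hm : 0 < m) (hγ : β + m = γ) :
    ∑ c : Fin m, aCoeff m c • ((1 + C (γ : ℚ) * X) ^ (c : ℕ) * (1 + C (β : ℚ) * X) ^ (m - c)) =
      ∏ s ∈ Ico β γ, (1 + C (s : ℚ) * X) := by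
  subst hγ
  have hshift : ∀ n : ℕ, 1 + C ((β + n : ℕ) : ℚ) * X = (1 + C (β : ℚ) * X) + n • X := by
    intro n
    rw [Nat.cast_add, C_add, nsmul_eq_mul, ← C_eq_natCast]
    ring
  rw [Fin.sum_univ_eq_sum_range
      (fun c => aCoeff m c • ((1 + C ((β + m : ℕ) : ℚ) * X) ^ c * (1 + C (β : ℚ) * X) ^ (m - c))),
    prod_Ico_eq_prod_range, Nat.add_sub_cancel_left]
  simp only [hshift]
  exact sum_aCoeff_smul_add_nsmul hm _ _

theorem prod_aCoeff_smul_prod_pow_eq_prod {l : ℕ} {i : ℕ → ℕ} (V : ℕ → ℚ[X]) (hV : V l = 1)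
    (t : (j : Fin l) → Fin (i (j.1 + 1) - i j.1)) (c : ℕ → ℕ)
    (hc : ∀ k (hk : k < l), c (k + 1) = t ⟨k, hk⟩) :
    (∏ j ∈ Icc 1 l, aCoeff (i j - i (j - 1)) (c j)) •
      ∏ j ∈ Icc 1 l,
        V (j - 1) ^ (if j = 1 then c 1 else c j + (i (j - 1) - i (j - 2)) - c (j - 1)) =
    ∏ k : Fin l, aCoeff (i (k + 1) - i k) (t k) •
      (V k ^ (t k : ℕ) * V (k + 1) ^ (i (k + 1) - i k - t k)) := by
  have hc_le : ∀ k < l, c (k + 1) ≤ i (k + 1) - i k := fun k hk => hc k hk ▸ (t _).2.le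
  calc _ = (∏ k ∈ range l, aCoeff (i (k + 1) - i k) (c (k + 1))) •
        ∏ k ∈ range l, V k ^ (c (k + 1) + (i k - i (k - 1) - c k)) := by
        rw [prod_Icc_one_eq_prod_range, prod_Icc_one_eq_prod_range]
        congr 1
        refine prod_congr rfl fun k hk => ?_
        rcases k with _ | k
        · simp
        · have hk_le := hc_le k (Nat.lt_of_succ_lt (mem_range.mp hk))
          simp only [Nat.add_sub_cancel, Nat.add_eq_right, reduceCtorEq, if_false,
            show k + 1 + 1 - 2 = k by omega]
          rw [Nat.add_sub_assoc hk_le]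
    _ = ∏ k ∈ range l, aCoeff (i (k + 1) - i k) (c (k + 1)) •
          (V k ^ c (k + 1) * V (k + 1) ^ (i (k + 1) - i k - c (k + 1))) := by
        rw [prod_smul,
          ← prod_range_pow_mul_pow_succ V _ (fun k => i k - i (k - 1) - c k) hV (by simp)]
        simp only [Nat.add_sub_cancel]
    _ = _ := by
        rw [← Fin.prod_univ_eq_prod_range
          (fun k => aCoeff (i (k + 1) - i k) (c (k + 1)) •
            (V k ^ c (k + 1) * V (k + 1) ^ (i (k + 1) - i k - c (k + 1))))]
        simp only [hc, Fin.is_lt]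

open Polynomial in
/-- For any ordered partition `0 = i₀ < i₁ < ⋯ < i_l = d`,
`∑_{c₁=0}^{i₁-i₀-1} ⋯ ∑_{c_l=0}^{i_l-i_{l-1}-1} a_{c₁}(i₁-i₀)⋯a_{c_l}(i_l-i_{l-1})
∏_{j=1}^{l} (1+(d-i_{j-1})w)^{c_j - c_{j-1} + i_{j-1} - i_{j-2}} = ∏_{j=1}^{d-1}(1+jw)`,
with conventions `c₀ = 0` and `i_{-1} = i₀ = 0` (so the `j = 1` exponent is `c₁`). -/
theorem stmt_3 (d l : ℕ) (i : ℕ → ℕ)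
    (hi0 : i 0 = 0) (hil : i l = d) (hmono : ∀ j, j < l → i j < i (j + 1)) :
    (∑ t : (j : Fin l) → Fin (i (j.1 + 1) - i j.1),
      (let c : ℕ → ℕ := fun s => if h : 1 ≤ s ∧ s ≤ l then (t ⟨s - 1, by omega⟩).1 else 0
       (∏ j ∈ Finset.Icc 1 l, aCoeff (i j - i (j - 1)) (c j)) •
        ∏ j ∈ Finset.Icc 1 l,
          (1 + C ((d : ℚ) - (i (j - 1) : ℚ)) * X) ^
            (if j = 1 then c 1 else c j + (i (j - 1) - i (j - 2)) - c (j - 1)))) =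
      ∏ j ∈ Finset.Icc 1 (d - 1), (1 + C (j : ℚ) * X) := by
  have hi : MonotoneOn i (Set.Iic l) :=
    monotoneOn_of_le_add_one Set.ordConnected_Iic fun k _ _ hk => (hmono k hk).le
  have hle : ∀ k ≤ l, i k ≤ d := fun k hk => hil ▸ hi hk (le_refl l) hk
  set V : ℕ → ℚ[X] := fun k => 1 + C ((d : ℚ) - (i k : ℚ)) * X
  calc _ = ∑ t : (j : Fin l) → Fin (i (j.1 + 1) - i j.1), ∏ k : Fin l,
        aCoeff (i (k + 1) - i k) (t k) • (V k ^ (t k : ℕ) * V (k + 1) ^ (i (k + 1) - i k - t k)) :=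
        sum_congr rfl fun t _ =>
          prod_aCoeff_smul_prod_pow_eq_prod V (by simp [V, hil]) t _ fun k hk => by simp [hk]
    _ = ∏ k : Fin l, ∑ c : Fin (i (k + 1) - i k),
        aCoeff (i (k + 1) - i k) c • (V k ^ (c : ℕ) * V (k + 1) ^ (i (k + 1) - i k - c)) :=
        (Fintype.prod_sum fun (k : Fin l) (c : Fin (i (k + 1) - i k)) =>
          aCoeff (i (k + 1) - i k) c • (V k ^ (c : ℕ) * V (k + 1) ^ (i (k + 1) - i k - c))).symm
    _ = ∏ k ∈ range l, ∏ s ∈ Ico (d - i (k + 1)) (d - i k), (1 + C (s : ℚ) * X) := by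
        rw [← Fin.prod_univ_eq_prod_range
          (fun k => ∏ s ∈ Ico (d - i (k + 1)) (d - i k), (1 + C (s : ℚ) * X))]
        refine prod_congr rfl fun k _ => ?_
        have hk := hmono k k.2
        have hk' := hle (k + 1) k.2
        simp only [V, ← Nat.cast_sub hk', ← Nat.cast_sub (hk.le.trans hk')]
        exact sum_aCoeff_smul_one_add_C_mul_X_pow (by omega) (by omega)
    _ = ∏ j ∈ Finset.Icc 1 (d - 1), (1 + C (j : ℚ) * X) := by
        rw [prod_range_prod_Ico_of_antitoneOn _
            fun a ha b hb hab => Nat.sub_le_sub_left (hi ha hb hab) d,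
          hil, hi0, Nat.sub_self, Nat.sub_zero, Nat.Ico_zero_eq_range,
          prod_Icc_one_sub_one_eq_prod_range (by simp)]
end

section
/- Pseudo-differential operator inversion: In the ring of pseudo-differential operators generated by $\partial_x$, $\partial_x^{-1}$, and multiplication by $e^x$, with relations $\partial_x e^{jx} = e^{jx}(\partial_x + j)$ and $\partial_x^{-1} e^{jx} = e^{jx}(\partial_x + j)^{-1}$, the operator $1 - k e^x (k\partial_x + k - 1)(k\partial_x+k-2)\cdots(k\partial_x+1)\partial_x^{-(N-1)}$ has two-sided inverse $1 + \sum_{d=1}^{\infty} e^{dx} \prod_{m=0}^{kd-1}(k\partial_x + m) \prod_{j=0}^{d-1}(\partial_x + j)^{-N}$. -/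
/-!
Both products reduce to one identity for the series `Q = ∑ e^{dx} Q_d(∂ₓ)`: since the products
defining `Q_{a+b}` telescope, `Q_{a+b}(∂ₓ) = Q_a(∂ₓ + b) Q_b(∂ₓ)`, i.e. `e^{(a+b)x} Q_{a+b}` is
the product of `e^{ax} Q_a` and `e^{bx} Q_b`. Moreover `k ∏_{m=1}^{k-1}(k∂ₓ+m) ∂ₓ^{-(N-1)}` is
`Q_1`, so the operator to invert is `1 - eˣ Q_1`, and the coefficients of `e^{(d+1)x}` in the two
products are `Q_{d+1} - Q_1(∂ₓ+d) Q_d` and `Q_{d+1} - Q_d(∂ₓ+1) Q_1`, both zero.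
-/

/-- In the algebra of formal series `∑_d e^{dx} R_d(∂ₓ)` with `R_d` rational functions of
`∂ₓ`, conjugation by `e^{jx}` shifts the argument: `R(∂ₓ) e^{jx} = e^{jx} R(∂ₓ + j)`. -/
noncomputable def shiftOp (j : ℕ) (R : RatFunc ℚ) : RatFunc ℚ :=
  RatFunc.eval (algebraMap ℚ (RatFunc ℚ)) (RatFunc.X + (j : RatFunc ℚ)) R

/-- Multiplication of pseudo-differential operators `∑ e^{ax} F_a(∂)` and `∑ e^{bx} G_b(∂)`:
the coefficient of `e^{dx}` is `∑_{a+b=d} F_a(∂+b) G_b(∂)`. -/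
noncomputable def pdoMul (F G : ℕ → RatFunc ℚ) : ℕ → RatFunc ℚ :=
  fun d => ∑ p ∈ Finset.HasAntidiagonal.antidiagonal d, shiftOp p.2 (F p.1) * G p.2

/-- The operator `1 - k eˣ (k∂ₓ+k-1)⋯(k∂ₓ+1) ∂ₓ^{-(N-1)}`. -/
noncomputable def Pop (N k : ℕ) : ℕ → RatFunc ℚ := fun d =>
  if d = 0 then 1
  else if d = 1 then
    -((k : RatFunc ℚ) *
        (∏ m ∈ Finset.Icc 1 (k - 1), ((k : RatFunc ℚ) * RatFunc.X + (m : RatFunc ℚ))) /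
      RatFunc.X ^ (N - 1))
  else 0

/-- The operator `1 + ∑_{d≥1} e^{dx} ∏_{m=0}^{kd-1}(k∂ₓ+m) ∏_{j=0}^{d-1}(∂ₓ+j)^{-N}`. -/
noncomputable def Qop (N k : ℕ) : ℕ → RatFunc ℚ := fun d =>
  (∏ m ∈ Finset.range (k * d), ((k : RatFunc ℚ) * RatFunc.X + (m : RatFunc ℚ))) /
    ∏ j ∈ Finset.range d, (RatFunc.X + (j : RatFunc ℚ)) ^ N

open scoped Polynomial

namespace RatFunc
variable {K : Type*} [Field K]

theorem algebraMap_taylor (c : K) (p : K[X]) :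
    algebraMap K[X] (RatFunc K) (p.taylor c) = p.eval₂ (algebraMap K (RatFunc K)) (X + C c) := by
  rw [Polynomial.taylor_apply, Polynomial.comp, Polynomial.hom_eval₂]
  simp [algebraMap_X, algebraMap_C]

noncomputable def translate (c : K) : RatFunc K →+* RatFunc K :=
  liftRingHom ((algebraMap K[X] (RatFunc K)).comp (Polynomial.taylorAlgHom c).toRingHom) <|
    nonZeroDivisors_le_comap_nonZeroDivisors_of_injective _ <|
      (IsFractionRing.injective K[X] (RatFunc K)).comp (Polynomial.taylor_injective c)

theorem translate_apply (c : K) (R : RatFunc K) :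
    translate c R = eval (algebraMap K (RatFunc K)) (X + C c) R := by
  simp [translate, liftRingHom_apply, eval, algebraMap_taylor]

theorem translate_X (c : K) : translate c X = X + C c := by
  rw [translate_apply, eval_X]

theorem translate_zero (R : RatFunc K) : translate 0 R = R := by
  simp [translate, liftRingHom_apply, num_div_denom]

end RatFunc

open Finset

theorem shiftOp_eq_translate (j : ℕ) : shiftOp j = RatFunc.translate (j : ℚ) := by
  ext R
  rw [shiftOp, RatFunc.translate_apply, map_natCast]
  congr 1
  exact Subsingleton.elim _ _

/-- The operator `1 - eˣ R(∂ₓ)`. -/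
noncomputable def oneSubExpMul (R : RatFunc ℚ) : ℕ → RatFunc ℚ := fun d =>
  if d = 0 then 1 else if d = 1 then -R else 0

theorem pdoMul_apply_zero (F G : ℕ → RatFunc ℚ) : pdoMul F G 0 = F 0 * G 0 := by
  simp [pdoMul, shiftOp_eq_translate, RatFunc.translate_zero]

theorem oneSubExpMul_pdoMul_succ (R : RatFunc ℚ) (F : ℕ → RatFunc ℚ) (c : ℕ) :
    pdoMul (oneSubExpMul R) F (c + 1) = F (c + 1) - shiftOp c R * F c := by
  rw [pdoMul, Nat.sum_antidiagonal_succ, sum_eq_single_of_mem (0, c) (by simp)]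
  · simp [oneSubExpMul, shiftOp_eq_translate, sub_eq_add_neg]
  · rintro ⟨a, b⟩ hab hne
    have : a ≠ 0 := by rintro rfl; simp_all
    simp [oneSubExpMul, shiftOp_eq_translate, this]

theorem pdoMul_oneSubExpMul_succ (F : ℕ → RatFunc ℚ) (R : RatFunc ℚ) (c : ℕ) :
    pdoMul F (oneSubExpMul R) (c + 1) = F (c + 1) - shiftOp 1 (F c) * R := by
  rw [pdoMul, Nat.sum_antidiagonal_succ', sum_eq_single_of_mem (c, 0) (by simp)]
  · simp [oneSubExpMul, shiftOp_eq_translate, RatFunc.translate_zero, sub_eq_add_neg]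
  · rintro ⟨a, b⟩ hab hne
    have : b ≠ 0 := by rintro rfl; simp_all
    simp [oneSubExpMul, this]

theorem oneSubExpMul_inverse_of_shift_mul {F : ℕ → RatFunc ℚ} (h0 : F 0 = 1)
    (hF : ∀ a b, F (a + b) = shiftOp b (F a) * F b) :
    (∀ d, pdoMul (oneSubExpMul (F 1)) F d = if d = 0 then 1 else 0) ∧
      (∀ d, pdoMul F (oneSubExpMul (F 1)) d = if d = 0 then 1 else 0) := by
  constructor <;> rintro (_ | c)
  · simp [pdoMul_apply_zero, oneSubExpMul, h0]
  · rw [oneSubExpMul_pdoMul_succ, if_neg c.add_one_ne_zero, ← add_comm 1 c, hF, sub_self]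
  · simp [pdoMul_apply_zero, oneSubExpMul, h0]
  · rw [pdoMul_oneSubExpMul_succ, hF, sub_self, if_neg c.add_one_ne_zero]

theorem Qop_add (N k a b : ℕ) : Qop N k (a + b) = shiftOp b (Qop N k a) * Qop N k b := by
  rw [mul_comm]
  simp only [Qop, shiftOp_eq_translate, map_div₀, map_prod, map_pow, map_add, map_mul,
    map_natCast, RatFunc.translate_X]
  rw [add_comm a b, mul_add, prod_range_add, prod_range_add, div_mul_div_comm]
  congr 2 <;> refine prod_congr rfl fun m _ => ?_ <;> push_cast <;> ring

theorem Pop_eq {N k : ℕ} (hN : 1 ≤ N) (hk : 1 ≤ k) : Pop N k = oneSubExpMul (Qop N k 1) := by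
  obtain ⟨M, rfl⟩ := Nat.exists_eq_add_of_le' hN
  obtain ⟨n, rfl⟩ := Nat.exists_eq_add_of_le' hk
  have hprod (f : ℕ → RatFunc ℚ) : ∏ m ∈ range (n + 1), f m = f 0 * ∏ m ∈ Icc 1 n, f m := by
    rw [range_eq_Ico, prod_eq_prod_Ico_succ_bot n.succ_pos, ← Ico_add_one_right_eq_Icc]
    rfl
  have hX : (RatFunc.X : RatFunc ℚ) ≠ 0 := RatFunc.X_ne_zero
  funext d
  simp only [Pop, oneSubExpMul, Qop, mul_one, hprod, prod_range_one, Nat.add_sub_cancel]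
  split_ifs
  · rfl
  · field_simp
    push_cast
    ring
  · rfl

/-- Pseudo-differential operator inversion: the operator
`1 - k eˣ (k∂ₓ+k-1)⋯(k∂ₓ+1) ∂ₓ^{-(N-1)}` has two-sided inverse
`1 + ∑_{d≥1} e^{dx} ∏_{m=0}^{kd-1}(k∂ₓ+m) ∏_{j=0}^{d-1}(∂ₓ+j)^{-N}`. -/
theorem stmt_13 (N k : ℕ) (hN : 1 ≤ N) (hk : 1 ≤ k) :
    (∀ d : ℕ, pdoMul (Pop N k) (Qop N k) d = if d = 0 then 1 else 0) ∧
    (∀ d : ℕ, pdoMul (Qop N k) (Pop N k) d = if d = 0 then 1 else 0) := by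
  rw [Pop_eq hN hk]
  exact oneSubExpMul_inverse_of_shift_mul (by simp [Qop]) (Qop_add N k)
end
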